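/- For any symmetric positive semidefinite P and positive definite R, and any x, the quadratic xᵀρ(P)x is monotone in P: if P₁ ⪯ P₂ (i.e., P₂ − P₁ is PSD), then ρ(P₁) ⪯ ρ(P₂), where ρ(P) = Q + AᵀPA − AᵀPB(R + BᵀPB)^{−1}BᵀPA. -/

import Mathlib

/-!
Completing the square in the gain gives
`Q + KᵀRK + (A - BK)ᵀP(A - BK) = ρ(P) + (K - K_P)ᵀ(R + BᵀPB)(K - K_P)` with
`K_P = (R + BᵀPB)⁻¹BᵀPA`, so `ρ(P)` is the Loewner minimum over `K` of a cost that is monotone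
in `P` for each fixed `K`. Hence `ρ(P₁) ≤ cost(P₁, K_{P₂}) ≤ cost(P₂, K_{P₂}) = ρ(P₂)`.
-/

open Matrix

open scoped MatrixOrder

namespace Matrix

variable {m u α : Type*} [Fintype u] [DecidableEq u] [CommRing α]

theorem transpose_sub_inv_mul_mul_mul_sub_inv_mul {S : Matrix u u α} (hS : S.IsSymm)
    (hdet : IsUnit S.det) (G K : Matrix u m α) :
    (K - S⁻¹ * G)ᵀ * S * (K - S⁻¹ * G) = Kᵀ * S * K - Kᵀ * G - Gᵀ * K + Gᵀ * S⁻¹ * G := by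
  simp only [transpose_sub, transpose_mul, transpose_nonsing_inv, hS.eq, Matrix.sub_mul,
    Matrix.mul_sub, Matrix.mul_assoc, mul_nonsing_inv_cancel_left _ _ hdet,
    nonsing_inv_mul_cancel_left _ _ hdet]
  abel

end Matrix

theorem Matrix.PosSemidef.transpose_mul_mul_same {m u : Type*} [Fintype m] [Fintype u]
    {M : Matrix m m ℝ} (hM : M.PosSemidef) (N : Matrix m u ℝ) : (Nᵀ * M * N).PosSemidef := by
  simpa using hM.conjTranspose_mul_mul_same N

section Riccati

variable {m u : Type*} [Fintype m] [Fintype u] [DecidableEq u]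

noncomputable def riccatiOp (A : Matrix m m ℝ) (B : Matrix m u ℝ) (Q : Matrix m m ℝ)
    (R : Matrix u u ℝ) (P : Matrix m m ℝ) : Matrix m m ℝ :=
  Q + Aᵀ * P * A - Aᵀ * P * B * (R + Bᵀ * P * B)⁻¹ * Bᵀ * P * A

noncomputable def lqrGain (A : Matrix m m ℝ) (B : Matrix m u ℝ) (R : Matrix u u ℝ)
    (P : Matrix m m ℝ) : Matrix u m ℝ :=
  (R + Bᵀ * P * B)⁻¹ * (Bᵀ * P * A)

/-- The matrix of `x ↦ xᵀQx + vᵀRv + (Ax + Bv)ᵀP(Ax + Bv)` along the feedback `v = -Kx`. -/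
def feedbackCost (A : Matrix m m ℝ) (B : Matrix m u ℝ) (Q : Matrix m m ℝ) (R : Matrix u u ℝ)
    (P : Matrix m m ℝ) (K : Matrix u m ℝ) : Matrix m m ℝ :=
  Q + Kᵀ * R * K + (A - B * K)ᵀ * P * (A - B * K)

variable (A : Matrix m m ℝ) (B : Matrix m u ℝ) (Q : Matrix m m ℝ) {R : Matrix u u ℝ}
  {P : Matrix m m ℝ}

omit [DecidableEq u] in
theorem posDef_add_transpose_mul_mul (hR : R.PosDef) (hP : P.PosSemidef) :
    (R + Bᵀ * P * B).PosDef :=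
  hR.add_posSemidef (hP.transpose_mul_mul_same B)

theorem feedbackCost_eq_riccatiOp_add (hR : R.PosDef) (hP : P.PosSemidef) (K : Matrix u m ℝ) :
    feedbackCost A B Q R P K = riccatiOp A B Q R P +
      (K - lqrGain A B R P)ᵀ * (R + Bᵀ * P * B) * (K - lqrGain A B R P) := by
  have hS := posDef_add_transpose_mul_mul B hR hP
  have hPsymm : Pᵀ = P := (isHermitian_iff_isSymm.mp hP.1).eq
  rw [lqrGain, transpose_sub_inv_mul_mul_mul_sub_inv_mul (isHermitian_iff_isSymm.mp hS.1)
    hS.det_pos.ne'.isUnit, feedbackCost, riccatiOp]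
  simp only [transpose_sub, transpose_mul, transpose_transpose, hPsymm, Matrix.add_mul,
    Matrix.mul_add, Matrix.sub_mul, Matrix.mul_sub, Matrix.mul_assoc]
  abel

theorem riccatiOp_le_feedbackCost (hR : R.PosDef) (hP : P.PosSemidef) (K : Matrix u m ℝ) :
    riccatiOp A B Q R P ≤ feedbackCost A B Q R P K := by
  rw [le_iff, feedbackCost_eq_riccatiOp_add A B Q hR hP K, add_sub_cancel_left]
  exact (posDef_add_transpose_mul_mul B hR hP).posSemidef.transpose_mul_mul_same _

theorem feedbackCost_lqrGain (hR : R.PosDef) (hP : P.PosSemidef) :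
    feedbackCost A B Q R P (lqrGain A B R P) = riccatiOp A B Q R P := by
  simp [feedbackCost_eq_riccatiOp_add A B Q hR hP]

omit [DecidableEq u] in
theorem feedbackCost_mono {P₁ P₂ : Matrix m m ℝ} (hle : P₁ ≤ P₂) (K : Matrix u m ℝ) :
    feedbackCost A B Q R P₁ K ≤ feedbackCost A B Q R P₂ K := by
  have hdiff : feedbackCost A B Q R P₂ K - feedbackCost A B Q R P₁ K =
      (A - B * K)ᵀ * (P₂ - P₁) * (A - B * K) := by
    simp only [feedbackCost, Matrix.mul_sub, Matrix.sub_mul]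
    abel
  rw [le_iff, hdiff]
  exact hle.transpose_mul_mul_same _

end Riccati

theorem stmt_14_general (n nu : ℕ)
    (A : Matrix (Fin n) (Fin n) ℝ) (B : Matrix (Fin n) (Fin nu) ℝ)
    (Q : Matrix (Fin n) (Fin n) ℝ) (R : Matrix (Fin nu) (Fin nu) ℝ)
    (hR : R.PosDef)
    (P₁ P₂ : Matrix (Fin n) (Fin n) ℝ)
    (hP₁ : P₁.PosSemidef) (hle : (P₂ - P₁).PosSemidef) :
    ((Q + Aᵀ * P₂ * A - Aᵀ * P₂ * B * (R + Bᵀ * P₂ * B)⁻¹ * Bᵀ * P₂ * A) -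
     (Q + Aᵀ * P₁ * A - Aᵀ * P₁ * B * (R + Bᵀ * P₁ * B)⁻¹ * Bᵀ * P₁ * A)).PosSemidef := by
  have hP₂ : P₂.PosSemidef := by simpa using hP₁.add hle
  show riccatiOp A B Q R P₁ ≤ riccatiOp A B Q R P₂
  calc riccatiOp A B Q R P₁ ≤ feedbackCost A B Q R P₁ (lqrGain A B R P₂) :=
        riccatiOp_le_feedbackCost A B Q hR hP₁ _
    _ ≤ feedbackCost A B Q R P₂ (lqrGain A B R P₂) := feedbackCost_mono A B Q hle _
    _ = riccatiOp A B Q R P₂ := feedbackCost_lqrGain A B Q hR hP₂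

theorem stmt_14 (n nu : ℕ)
    (A : Matrix (Fin n) (Fin n) ℝ) (B : Matrix (Fin n) (Fin nu) ℝ)
    (Q : Matrix (Fin n) (Fin n) ℝ) (R : Matrix (Fin nu) (Fin nu) ℝ)
    (hQ : Q.PosSemidef) (hR : R.PosDef)
    (P₁ P₂ : Matrix (Fin n) (Fin n) ℝ)
    (hP₁ : P₁.PosSemidef) (hP₂ : P₂.PosSemidef) (hle : (P₂ - P₁).PosSemidef) :
    ((Q + Aᵀ * P₂ * A - Aᵀ * P₂ * B * (R + Bᵀ * P₂ * B)⁻¹ * Bᵀ * P₂ * A) -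
     (Q + Aᵀ * P₁ * A - Aᵀ * P₁ * B * (R + Bᵀ * P₁ * B)⁻¹ * Bᵀ * P₁ * A)).PosSemidef :=
  stmt_14_general n nu A B Q R hR P₁ P₂ hP₁ hle
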